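/- (One-step deviation bound) Suppose the family θ satisfies the fixed-point property. Fix t ∈ {1,…,T} and a Markov policy σ, and let σ' be the policy that plays σ_t at time t and θ_k at all times k > t. Then for every z ∈ PMF X and x ∈ X, J_t^{σ'}(z,x) = ∑_{a∈A} σ_t(z)(x)(a) · Q_t(z,x,a,θ_t(z)), and consequently J_t^{σ'}(z,x) ≤ V_t(z,x). -/
import Mathlib

set_option maxRecDepth 10000
set_option maxHeartbeats 2000000
set_option linter.unusedSectionVars false

open scoped BigOperators ENNReal

section MFG

variable {X A : Type*} [Fintype X] [Fintype A] [Nonempty X] [Nonempty A]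

/-- McKean–Vlasov update: `phi τ z γ (y) = ∑ x, ∑ a, z x * γ x a * τ x a z y`. -/
noncomputable def phi (τ : X → A → PMF X → PMF X) (z : PMF X) (γ : X → PMF A) : PMF X :=
  z.bind fun x => (γ x).bind fun a => τ x a z

/-- Backward-recursive value function with `V (T+1) = 0`. -/
noncomputable def V (τ : X → A → PMF X → PMF X) (R : X → A → PMF X → ℝ) (δ : ℝ)
    (T : ℕ) (θ : ℕ → PMF X → X → PMF A) (t : ℕ) (z : PMF X) (x : X) : ℝ :=
  if h : T < t then 0
  else
    ∑ a : A, ((θ t z x) a).toReal *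
      (R x a z + δ * ∑ x' : X, ((τ x a z) x').toReal *
        V τ R δ T θ (t + 1) (phi τ z (θ t z)) x')
termination_by T + 1 - t
decreasing_by omega

/-- Action-value function `Q_t(z,x,a,γ)`. -/
noncomputable def Q (τ : X → A → PMF X → PMF X) (R : X → A → PMF X → ℝ) (δ : ℝ)
    (T : ℕ) (θ : ℕ → PMF X → X → PMF A) (t : ℕ) (z : PMF X) (x : X) (a : A)
    (γ : X → PMF A) : ℝ :=
  R x a z + δ * ∑ x' : X, ((τ x a z) x').toReal * V τ R δ T θ (t + 1) (phi τ z γ) x'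

/-- The fixed-point property of the equilibrium generating family `θ`. -/
def IsFixedPoint (τ : X → A → PMF X → PMF X) (R : X → A → PMF X → ℝ) (δ : ℝ)
    (T : ℕ) (θ : ℕ → PMF X → X → PMF A) : Prop :=
  ∀ t, 1 ≤ t → t ≤ T → ∀ (z : PMF X) (x : X) (π : PMF A),
    ∑ a : A, ((θ t z x) a).toReal * Q τ R δ T θ t z x a (θ t z) ≥
      ∑ a : A, (π a).toReal * Q τ R δ T θ t z x a (θ t z)

/-- Mean-field flow generated by the policy `θ`, started from `z` at time `t`:
`flow τ θ t z n = z_{t+n}`. -/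
noncomputable def flow (τ : X → A → PMF X → PMF X) (θ : ℕ → PMF X → X → PMF A)
    (t : ℕ) (z : PMF X) : ℕ → PMF X
  | 0 => z
  | n + 1 => phi τ (flow τ θ t z n) (θ (t + n) (flow τ θ t z n))

/-- Individual state trajectory: `traj x xs 0 = x`, `traj x xs (i+1) = xs i`. -/
def traj {n : ℕ} (x : X) (xs : Fin n → X) : Fin (n + 1) → X := Fin.cases x xs

/-- Path-sum expected discounted return `J_t^σ(z,x)` of the Markov policy `σ`,
against the mean-field flow generated by `θ` started from `z` at time `t`. -/
noncomputable def J (τ : X → A → PMF X → PMF X) (R : X → A → PMF X → ℝ) (δ : ℝ)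
    (T : ℕ) (θ σ : ℕ → PMF X → X → PMF A) (t : ℕ) (z : PMF X) (x : X) : ℝ :=
  ∑ as : Fin (T - t + 1) → A, ∑ xs : Fin (T - t) → X,
    ((∏ k : Fin (T - t + 1),
        ((σ (t + (k : ℕ)) (flow τ θ t z (k : ℕ)) (traj x xs k)) (as k)).toReal) *
      (∏ k : Fin (T - t),
        ((τ (traj x xs k.castSucc) (as k.castSucc) (flow τ θ t z (k : ℕ)))
          (traj x xs k.succ)).toReal)) *
    (∑ k : Fin (T - t + 1),
      δ ^ (k : ℕ) * R (traj x xs k) (as k) (flow τ θ t z (k : ℕ)))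

/-! ### Auxiliary machinery -/

@[simp] lemma traj_zero {n : ℕ} (x : X) (xs : Fin n → X) : traj x xs 0 = x := rfl
@[simp] lemma traj_succ {n : ℕ} (x : X) (xs : Fin n → X) (i : Fin n) :
    traj x xs i.succ = xs i := by simp [traj]
@[simp] lemma cons_eq_traj {n : ℕ} (x : X) (xs : Fin n → X) (i : Fin (n+1)) :
    (Fin.cons x xs : Fin (n+1) → X) i = traj x xs i := rfl

@[simp] lemma flow_zero (τ : X → A → PMF X → PMF X) (θ : ℕ → PMF X → X → PMF A)
    (t : ℕ) (z : PMF X) : flow τ θ t z 0 = z := rfl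

lemma flow_shift (τ : X → A → PMF X → PMF X) (θ : ℕ → PMF X → X → PMF A)
    (t : ℕ) (z : PMF X) (n : ℕ) :
    flow τ θ t z (n + 1) = flow τ θ (t + 1) (phi τ z (θ t z)) n := by
  induction n with
  | zero => simp [flow]
  | succ m ih => rw [flow, ih]; rw [show t + (m+1) = t + 1 + m by omega]; rfl

@[simp] lemma castSucc_succ' {n : ℕ} (j : Fin n) :
    (j.succ).castSucc = (j.castSucc).succ := rfl

lemma val_succ_shift {m : ℕ} (t : ℕ) (j : Fin m) :
    t + (j.succ : Fin (m+1)).1 = t + 1 + (j : ℕ) := by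
  rw [Fin.val_succ]; omega

lemma flow_val_shift (τ : X → A → PMF X → PMF X) (θ : ℕ → PMF X → X → PMF A)
    (t : ℕ) (z : PMF X) {m : ℕ} (j : Fin m) :
    flow τ θ t z (j.succ : Fin (m+1)).1 = flow τ θ (t+1) (phi τ z (θ t z)) (j : ℕ) := by
  rw [Fin.val_succ, flow_shift]

lemma sum_pow_val_succ (δ : ℝ) {m : ℕ} (g : Fin m → ℝ) :
    ∑ j : Fin m, δ ^ ((j.succ : Fin (m+1)) : ℕ) * g j = δ * ∑ j : Fin m, δ ^ (j : ℕ) * g j := by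
  rw [Finset.mul_sum]
  exact Finset.sum_congr rfl fun j _ => by rw [Fin.val_succ]; ring

lemma sum_pmf_toReal {α : Type*} [Fintype α] (p : PMF α) :
    ∑ a : α, (p a).toReal = 1 := by
  have h := p.tsum_coe
  rw [tsum_fintype] at h
  have : (∑ a : α, p a).toReal = (1 : ℝ≥0∞).toReal := by rw [h]
  rwa [ENNReal.toReal_sum (fun a _ => p.apply_ne_top a)] at this

lemma sum_pi_succ {α β : Type*} [Fintype α] [AddCommMonoid β] (n : ℕ)
    (g : (Fin (n+1) → α) → β) :
    ∑ f : Fin (n+1) → α, g f = ∑ a : α, ∑ f : Fin n → α, g (Fin.cons a f) := by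
  rw [← Equiv.sum_comp (Fin.consEquiv fun _ => α) g, Fintype.sum_prod_type]
  rfl

lemma sum_pi_succ2 {α β M : Type*} [Fintype α] [Fintype β] [AddCommMonoid M] (n : ℕ)
    (g : (Fin (n+1+1) → α) → (Fin (n+1) → β) → M) :
    (∑ as : Fin (n+1+1) → α, ∑ xs : Fin (n+1) → β, g as xs)
    = ∑ a : α, ∑ x1 : β, ∑ as : Fin (n+1) → α, ∑ xs : Fin n → β,
        g (Fin.cons a as) (Fin.cons x1 xs) := by
  rw [sum_pi_succ]
  refine Finset.sum_congr rfl fun a _ => ?_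
  calc ∑ as' : Fin (n+1) → α, ∑ xs : Fin (n+1) → β, g (Fin.cons a as') xs
      = ∑ as' : Fin (n+1) → α, ∑ x1 : β, ∑ xs' : Fin n → β,
          g (Fin.cons a as') (Fin.cons x1 xs') :=
        Finset.sum_congr rfl fun as' _ => sum_pi_succ n _
    _ = _ := Finset.sum_comm ..

/-- Total transition mass of a length-`n` path block. -/
noncomputable def mass (τ : X → A → PMF X → PMF X) (θ σ : ℕ → PMF X → X → PMF A)
    (n t : ℕ) (z : PMF X) (x : X) : ℝ :=
  ∑ as : Fin (n + 1) → A, ∑ xs : Fin n → X,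
    (∏ k : Fin (n+1),
        ((σ (t + (k : ℕ)) (flow τ θ t z (k : ℕ)) (traj x xs k)) (as k)).toReal) *
      (∏ k : Fin n,
        ((τ (traj x xs k.castSucc) (as k.castSucc) (flow τ θ t z (k : ℕ)))
          (traj x xs k.succ)).toReal)

lemma mass_zero (τ : X → A → PMF X → PMF X) (θ σ : ℕ → PMF X → X → PMF A)
    (t : ℕ) (z : PMF X) (x : X) : mass τ θ σ 0 t z x = 1 := by
  rw [mass, sum_pi_succ]
  simp [flow, sum_pmf_toReal]

lemma mass_succ (τ : X → A → PMF X → PMF X) (θ σ : ℕ → PMF X → X → PMF A)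
    (n t : ℕ) (z : PMF X) (x : X) :
    mass τ θ σ (n+1) t z x =
      ∑ a : A, ((σ t z x) a).toReal * ∑ x1 : X, ((τ x a z) x1).toReal *
        mass τ θ σ n (t+1) (phi τ z (θ t z)) x1 := by
  simp only [mass]
  rw [sum_pi_succ2]
  simp only [Finset.mul_sum]
  refine Finset.sum_congr rfl fun a _ => Finset.sum_congr rfl fun x1 _ =>
    Finset.sum_congr rfl fun as' _ => Finset.sum_congr rfl fun xs' _ => ?_
  simp only [Fin.prod_univ_succ, Fin.val_zero, Nat.add_zero, flow_zero, traj_zero,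
    traj_succ, cons_eq_traj, Fin.cons_zero, Fin.cons_succ, castSucc_succ',
    val_succ_shift, flow_val_shift, Fin.coe_castSucc, Fin.castSucc_zero]
  ring

lemma mass_eq_one (τ : X → A → PMF X → PMF X) (θ σ : ℕ → PMF X → X → PMF A)
    (n : ℕ) : ∀ (t : ℕ) (z : PMF X) (x : X), mass τ θ σ n t z x = 1 := by
  induction n with
  | zero => exact fun t z x => mass_zero τ θ σ t z x
  | succ m ih =>
    intro t z x
    rw [mass_succ]
    simp [ih, sum_pmf_toReal]

/-- `J` with the horizon length as an explicit parameter. -/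
noncomputable def Jgen (τ : X → A → PMF X → PMF X) (R : X → A → PMF X → ℝ) (δ : ℝ)
    (θ σ : ℕ → PMF X → X → PMF A) (n t : ℕ) (z : PMF X) (x : X) : ℝ :=
  ∑ as : Fin (n + 1) → A, ∑ xs : Fin n → X,
    ((∏ k : Fin (n + 1),
        ((σ (t + (k : ℕ)) (flow τ θ t z (k : ℕ)) (traj x xs k)) (as k)).toReal) *
      (∏ k : Fin n,
        ((τ (traj x xs k.castSucc) (as k.castSucc) (flow τ θ t z (k : ℕ)))
          (traj x xs k.succ)).toReal)) *
    (∑ k : Fin (n + 1), δ ^ (k : ℕ) * R (traj x xs k) (as k) (flow τ θ t z (k : ℕ)))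

lemma J_eq_Jgen (τ : X → A → PMF X → PMF X) (R : X → A → PMF X → ℝ) (δ : ℝ)
    (T : ℕ) (θ σ : ℕ → PMF X → X → PMF A) (t : ℕ) (z : PMF X) (x : X) :
    J τ R δ T θ σ t z x = Jgen τ R δ θ σ (T - t) t z x := rfl

lemma Jgen_zero (τ : X → A → PMF X → PMF X) (R : X → A → PMF X → ℝ) (δ : ℝ)
    (θ σ : ℕ → PMF X → X → PMF A) (t : ℕ) (z : PMF X) (x : X) :
    Jgen τ R δ θ σ 0 t z x = ∑ a : A, ((σ t z x) a).toReal * R x a z := by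
  rw [Jgen, sum_pi_succ]
  simp

@[simp] lemma pow_val_succ (δ : ℝ) {m : ℕ} (j : Fin m) :
    δ ^ ((j.succ : Fin (m+1)) : ℕ) = δ * δ ^ (j : ℕ) := by
  rw [Fin.val_succ]; ring

lemma Jgen_succ_mass (τ : X → A → PMF X → PMF X) (R : X → A → PMF X → ℝ) (δ : ℝ)
    (θ σ : ℕ → PMF X → X → PMF A) (n t : ℕ) (z : PMF X) (x : X) :
    Jgen τ R δ θ σ (n+1) t z x =
      ∑ a : A, ∑ x1 : X, ((σ t z x) a).toReal * (((τ x a z) x1).toReal *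
        (R x a z * mass τ θ σ n (t+1) (phi τ z (θ t z)) x1 +
          δ * Jgen τ R δ θ σ n (t+1) (phi τ z (θ t z)) x1)) := by
  simp only [Jgen, mass]
  rw [sum_pi_succ2]
  simp only [Fin.sum_univ_succ, Fin.prod_univ_succ, Fin.val_zero, Nat.add_zero,
    pow_zero, one_mul, flow_zero, traj_zero, traj_succ, cons_eq_traj, Fin.cons_zero,
    Fin.cons_succ, castSucc_succ', val_succ_shift, flow_val_shift, Fin.coe_castSucc,
    Fin.castSucc_zero, pow_val_succ]
  simp only [mul_add, add_mul, Finset.mul_sum, Finset.sum_mul, Finset.sum_add_distrib]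
  congr 1
  · refine Finset.sum_congr rfl fun a _ => Finset.sum_congr rfl fun x1 _ =>
      Finset.sum_congr rfl fun as' _ => Finset.sum_congr rfl fun xs' _ => by ring
  congr 1
  · refine Finset.sum_congr rfl fun a _ => Finset.sum_congr rfl fun x1 _ =>
      Finset.sum_congr rfl fun as' _ => Finset.sum_congr rfl fun xs' _ => by ring
  · refine Finset.sum_congr rfl fun a _ => Finset.sum_congr rfl fun x1 _ =>
      Finset.sum_congr rfl fun as' _ => Finset.sum_congr rfl fun xs' _ =>
      Finset.sum_congr rfl fun j _ => by ring

lemma Jgen_succ (τ : X → A → PMF X → PMF X) (R : X → A → PMF X → ℝ) (δ : ℝ)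
    (θ σ : ℕ → PMF X → X → PMF A) (n t : ℕ) (z : PMF X) (x : X) :
    Jgen τ R δ θ σ (n+1) t z x =
      ∑ a : A, ((σ t z x) a).toReal *
        (R x a z + δ * ∑ x1 : X, ((τ x a z) x1).toReal *
          Jgen τ R δ θ σ n (t+1) (phi τ z (θ t z)) x1) := by
  rw [Jgen_succ_mass]
  simp only [mass_eq_one, mul_one]
  refine Finset.sum_congr rfl fun a _ => ?_
  rw [← Finset.mul_sum]
  congr 1
  have h2 : ∑ x1 : X, ((τ x a z) x1).toReal *
        (R x a z + δ * Jgen τ R δ θ σ n (t+1) (phi τ z (θ t z)) x1)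
      = (∑ x1 : X, ((τ x a z) x1).toReal) * R x a z +
        δ * ∑ x1 : X, ((τ x a z) x1).toReal *
          Jgen τ R δ θ σ n (t+1) (phi τ z (θ t z)) x1 := by
    rw [Finset.sum_mul, Finset.mul_sum, ← Finset.sum_add_distrib]
    exact Finset.sum_congr rfl fun x1 _ => by ring
  rw [h2, sum_pmf_toReal, one_mul]

lemma V_stop (τ : X → A → PMF X → PMF X) (R : X → A → PMF X → ℝ) (δ : ℝ)
    (T : ℕ) (θ : ℕ → PMF X → X → PMF A) {t : ℕ} (ht : T < t) (z : PMF X) (x : X) :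
    V τ R δ T θ t z x = 0 := by
  rw [V]; exact dif_pos ht

lemma Jgen_eq_V (τ : X → A → PMF X → PMF X) (R : X → A → PMF X → ℝ) (δ : ℝ)
    (T : ℕ) (θ σ' : ℕ → PMF X → X → PMF A) :
    ∀ n t, t + n = T → (∀ k, t ≤ k → σ' k = θ k) →
      ∀ (z : PMF X) (x : X), Jgen τ R δ θ σ' n t z x = V τ R δ T θ t z x := by
  intro n
  induction n with
  | zero =>
    intro t hT hσ z x
    rw [Jgen_zero, hσ t le_rfl]
    conv_rhs => rw [V]
    rw [dif_neg (by omega)]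
    have hV : ∀ (z' : PMF X) (x' : X), V τ R δ T θ (t+1) z' x' = 0 :=
      fun z' x' => V_stop τ R δ T θ (by omega) z' x'
    simp [hV]
  | succ m ih =>
    intro t hT hσ z x
    rw [Jgen_succ, hσ t le_rfl]
    conv_rhs => rw [V]
    rw [dif_neg (by omega)]
    refine Finset.sum_congr rfl fun a _ => ?_
    have hJV : ∀ x1 : X, Jgen τ R δ θ σ' m (t+1) (phi τ z (θ t z)) x1
        = V τ R δ T θ (t+1) (phi τ z (θ t z)) x1 :=
      fun x1 => ih (t+1) (by omega) (fun k hk => hσ k (by omega)) _ x1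
    simp only [hJV]

/-- one-step deviation bound: the policy that plays `σ_t` at time `t` and
`θ_k` at all times `k > t` has return `∑ a, σ_t(z)(x)(a)·Q_t(z,x,a,θ_t(z))`, which is at
most `V_t(z,x)`. -/
theorem one_step_deviation_bound
    (τ : X → A → PMF X → PMF X) (R : X → A → PMF X → ℝ) (δ : ℝ)
    (hδ0 : 0 < δ) (hδ1 : δ ≤ 1) (T : ℕ) (hT : 1 ≤ T)
    (θ : ℕ → PMF X → X → PMF A) (hθ : IsFixedPoint τ R δ T θ)
    (σ : ℕ → PMF X → X → PMF A)
    (t : ℕ) (ht1 : 1 ≤ t) (htT : t ≤ T) (z : PMF X) (x : X) :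
    J τ R δ T θ (fun k => if k ≤ t then σ k else θ k) t z x =
      ∑ a : A, ((σ t z x) a).toReal * Q τ R δ T θ t z x a (θ t z) ∧
    J τ R δ T θ (fun k => if k ≤ t then σ k else θ k) t z x ≤ V τ R δ T θ t z x := by
  set σ' : ℕ → PMF X → X → PMF A := fun k => if k ≤ t then σ k else θ k with hσ'
  have hσt : σ' t = σ t := by simp [hσ']
  have hVQ : V τ R δ T θ t z x
      = ∑ a : A, ((θ t z x) a).toReal * Q τ R δ T θ t z x a (θ t z) := by
    conv_lhs => rw [V]
    rw [dif_neg (by omega)]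
    rfl
  have h1 : J τ R δ T θ σ' t z x
      = ∑ a : A, ((σ t z x) a).toReal * Q τ R δ T θ t z x a (θ t z) := by
    rw [J_eq_Jgen]
    rcases Nat.lt_or_ge t T with hlt | hge
    · have hn : T - t = (T - (t+1)) + 1 := by omega
      rw [hn, Jgen_succ, hσt]
      refine Finset.sum_congr rfl fun a _ => ?_
      have hJV : ∀ x1 : X, Jgen τ R δ θ σ' (T - (t+1)) (t+1) (phi τ z (θ t z)) x1
          = V τ R δ T θ (t+1) (phi τ z (θ t z)) x1 :=
        fun x1 => Jgen_eq_V τ R δ T θ σ' (T - (t+1)) (t+1) (by omega)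
          (fun k hk => by simp only [hσ']; rw [if_neg (by omega)]) _ x1
      simp only [hJV]
      rfl
    · have hn : T - t = 0 := by omega
      rw [hn, Jgen_zero, hσt]
      refine Finset.sum_congr rfl fun a _ => ?_
      have hV0 : ∀ x' : X, V τ R δ T θ (t+1) (phi τ z (θ t z)) x' = 0 :=
        fun x' => V_stop τ R δ T θ (by omega) _ x'
      rw [Q]
      simp [hV0]
  refine ⟨h1, ?_⟩
  rw [h1, hVQ]
  exact hθ t ht1 htT z x (σ t z x)

end MFG
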